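/- Let c > 0 and 0 < c₁ < c. Let ν be a probability density on ℝ with 0 ≤ ν(s) ≤ e^{−c|s|} for all s ∈ ℝ, let μ ∈ ℝ, σ > 0, and set f := ν − φ_{μ,σ} and f̂(z) := ∫_ℝ f(s) e^{izs} ds (which is well defined and holomorphic on the disc {z ∈ ℂ : |z| ≤ c₁}). Suppose ε > 0 is such that |f̂(z)| ≤ ε for all z ∈ ℂ with |z| ≤ c₁. Then for every k ∈ ℕ: | ∫_ℝ ( ν(s) − φ_{μ,σ}(s) ) s^k ds | ≤ (k! / c₁^k) ε. -/

import Mathlib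

open MeasureTheory Complex

/-- Gaussian density with mean `μ` and variance `σ`. -/
noncomputable def gaussDensity (μ σ x : ℝ) : ℝ :=
  (Real.sqrt (2 * Real.pi * σ))⁻¹ * Real.exp (-(x - μ) ^ 2 / (2 * σ))

/-- The (complex-argument) Fourier transform `f̂(z) = ∫ f(s) e^{izs} ds`. -/
noncomputable def fhat (f : ℝ → ℝ) (z : ℂ) : ℂ :=
  ∫ s : ℝ, (f s : ℂ) * Complex.exp (Complex.I * z * s)

/-!
Regard `ν(s) ds` and `φ_{μ,σ}(s) ds` as measures on `ℝ`. Since both densities decay at least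
like `e^{-c|s|}` (the Gaussian one faster than any exponential), their complex moment generating
functions are holomorphic on the strip `|Re w| < c`, and `w ↦ f̂(-i w)` is their difference.
The `k`-th derivative of that difference at `0` is the `k`-th moment of `f`, so Cauchy's estimate
on the circle `|w| = c₁` bounds it by `k! ε / c₁^k`.
-/

open Real ProbabilityTheory Set Metric

lemma integrable_exp_neg_mul_abs {d : ℝ} (hd : 0 < d) :
    Integrable fun x : ℝ => rexp (-d * |x|) :=
  .of_integral_ne_zero <| by
    rw [integral_comp_abs (f := fun x => rexp (-d * x)), integral_exp_mul_Ioi (by linarith) 0]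
    simp [hd.ne']

lemma gaussDensity_nonneg (μ σ x : ℝ) : 0 ≤ gaussDensity μ σ x := by
  unfold gaussDensity; positivity

lemma continuous_gaussDensity (μ σ : ℝ) : Continuous (gaussDensity μ σ) := by
  unfold gaussDensity; fun_prop

lemma gaussDensity_le_mul_exp_neg_mul_abs (μ : ℝ) {σ : ℝ} (hσ : 0 < σ) (c : ℝ) :
    ∃ K, ∀ s, gaussDensity μ σ s ≤ K * rexp (-c * |s|) := by
  -- completing the square, `-(s - μ)² / (2σ) ≤ σc²/2 - |c| |s - μ|`; and `|s| ≤ |s - μ| + |μ|`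
  refine ⟨(√(2 * π * σ))⁻¹ * rexp (σ * c ^ 2 / 2 + |c| * |μ|), fun s => ?_⟩
  rw [gaussDensity, mul_assoc _ (rexp _), ← Real.exp_add]
  gcongr
  have hs : c * |s| ≤ |c| * (|s - μ| + |μ|) :=
    (mul_le_mul_of_nonneg_right (le_abs_self c) (abs_nonneg s)).trans <|
      mul_le_mul_of_nonneg_left (by simpa using abs_add_le (s - μ) μ) (abs_nonneg c)
  rw [div_le_iff₀ (by positivity)]
  nlinarith [sq_nonneg (|s - μ| - σ * |c|), sq_abs (s - μ), congrArg (σ ^ 2 * ·) (sq_abs c),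
    mul_le_mul_of_nonneg_left hs hσ.le]

section complexMGF

variable {m m₁ m₂ : Measure ℝ}

lemma iteratedDeriv_complexMGF_zero (h : 0 ∈ interior (integrableExpSet id m)) (k : ℕ) :
    iteratedDeriv k (complexMGF id m) 0 = ((∫ x, x ^ k ∂m : ℝ) : ℂ) := by
  rw [iteratedDeriv_complexMGF (by simpa using h), ← integral_complex_ofReal]
  simp only [id, zero_mul, Complex.exp_zero, mul_one, ofReal_pow]

lemma re_mem_of_mem_closedBall {S : Set ℝ} {r : ℝ} (h : Icc (-r) r ⊆ S) {w : ℂ}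
    (hw : w ∈ closedBall 0 r) : w.re ∈ S :=
  h (abs_le.1 ((abs_re_le_norm w).trans (mem_closedBall_zero_iff.1 hw)))

lemma abs_integral_pow_sub_le_of_norm_complexMGF_sub_le {r ε : ℝ} (hr : 0 < r)
    (h₁ : Icc (-r) r ⊆ interior (integrableExpSet id m₁))
    (h₂ : Icc (-r) r ⊆ interior (integrableExpSet id m₂))
    (hε : ∀ w ∈ sphere (0 : ℂ) r, ‖complexMGF id m₁ w - complexMGF id m₂ w‖ ≤ ε) (k : ℕ) :
    |∫ x, x ^ k ∂m₁ - ∫ x, x ^ k ∂m₂| ≤ k.factorial * ε / r ^ k := by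
  have hdiff : DiffContOnCl ℂ (complexMGF id m₁ - complexMGF id m₂) (ball 0 r) :=
    ((differentiableOn_complexMGF.mono fun _ => re_mem_of_mem_closedBall h₁).sub
      (differentiableOn_complexMGF.mono fun _ => re_mem_of_mem_closedBall h₂)).diffContOnCl_ball
      subset_rfl
  have h0 : (0 : ℂ).re ∈ Icc (-r) r := by simp [hr.le]
  have hmoments : iteratedDeriv k (complexMGF id m₁ - complexMGF id m₂) 0 =
      ((∫ x, x ^ k ∂m₁ - ∫ x, x ^ k ∂m₂ : ℝ) : ℂ) := by
    rw [iteratedDeriv_sub (analyticAt_complexMGF (h₁ h0)).contDiffAt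
      (analyticAt_complexMGF (h₂ h0)).contDiffAt, iteratedDeriv_complexMGF_zero (h₁ h0),
      iteratedDeriv_complexMGF_zero (h₂ h0), ofReal_sub]
  rw [← Real.norm_eq_abs, ← Complex.norm_real, ← hmoments]
  exact norm_iteratedDeriv_le_of_forall_mem_sphere_norm_le k hr hdiff hε

end complexMGF

noncomputable def densityMeasure (ρ : ℝ → ℝ) : Measure ℝ :=
  volume.withDensity fun s => ENNReal.ofReal (ρ s)

section densityMeasure

variable {ρ ρ₁ ρ₂ : ℝ → ℝ} {E : Type*} [NormedAddCommGroup E] [NormedSpace ℝ E]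

lemma integral_densityMeasure (hρ : AEMeasurable ρ) (hρ0 : ∀ s, 0 ≤ ρ s) (g : ℝ → E) :
    ∫ s, g s ∂densityMeasure ρ = ∫ s, ρ s • g s := by
  refine (integral_withDensity_eq_integral_smul₀ hρ.real_toNNReal g).trans ?_
  simp_rw [NNReal.smul_def, Real.coe_toNNReal _ (hρ0 _)]

lemma integrable_densityMeasure_iff (hρ : AEMeasurable ρ) (hρ0 : ∀ s, 0 ≤ ρ s) {g : ℝ → E} :
    Integrable g (densityMeasure ρ) ↔ Integrable fun s => ρ s • g s := by
  refine (integrable_withDensity_iff_integrable_smul₀ hρ.real_toNNReal).trans ?_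
  simp_rw [NNReal.smul_def, Real.coe_toNNReal _ (hρ0 _)]

lemma Ioo_subset_interior_integrableExpSet_densityMeasure (hρ : AEMeasurable ρ)
    (hρ0 : ∀ s, 0 ≤ ρ s) {K c : ℝ} (hρK : ∀ s, ρ s ≤ K * rexp (-c * |s|)) :
    Ioo (-c) c ⊆ interior (integrableExpSet id (densityMeasure ρ)) := by
  refine interior_maximal (fun t ht => ?_) isOpen_Ioo
  rw [integrableExpSet, mem_ofPred_eq, integrable_densityMeasure_iff hρ hρ0]
  have hd : 0 < c - |t| := by simpa [abs_lt] using ht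
  refine ((integrable_exp_neg_mul_abs hd).const_mul K).mono'
    (hρ.smul (by fun_prop)).aestronglyMeasurable (ae_of_all _ fun s => ?_)
  have hts : t * s ≤ |t| * |s| := (le_abs_self _).trans (abs_mul t s).le
  rw [norm_smul, norm_of_nonneg (hρ0 s), norm_of_nonneg (exp_nonneg _)]
  calc ρ s * rexp (t * s) ≤ K * rexp (-c * |s|) * rexp (|t| * |s|) :=
        mul_le_mul (hρK s) (exp_le_exp.2 hts) (exp_nonneg _) ((hρ0 s).trans (hρK s))
    _ = K * rexp (-(c - |t|) * |s|) := by rw [mul_assoc, ← Real.exp_add]; ring_nf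

lemma integrable_mul_cexp_of_re_mem_integrableExpSet (hρ : AEMeasurable ρ) (hρ0 : ∀ s, 0 ≤ ρ s)
    {w : ℂ} (hw : w.re ∈ integrableExpSet id (densityMeasure ρ)) :
    Integrable fun s => (ρ s : ℂ) * cexp (w * s) := by
  simpa [integrable_densityMeasure_iff hρ hρ0, Complex.real_smul] using
    integrable_cexp_mul_of_re_mem_integrableExpSet aemeasurable_id hw

lemma integrable_mul_pow_of_mem_interior_integrableExpSet (hρ : AEMeasurable ρ)
    (hρ0 : ∀ s, 0 ≤ ρ s) (h : 0 ∈ interior (integrableExpSet id (densityMeasure ρ))) (k : ℕ) :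
    Integrable fun s => ρ s * s ^ k := by
  simpa [integrable_densityMeasure_iff hρ hρ0] using
    integrable_pow_of_mem_interior_integrableExpSet h k

lemma complexMGF_densityMeasure (hρ : AEMeasurable ρ) (hρ0 : ∀ s, 0 ≤ ρ s) (w : ℂ) :
    complexMGF id (densityMeasure ρ) w = ∫ s, (ρ s : ℂ) * cexp (w * s) := by
  simp [complexMGF, integral_densityMeasure hρ hρ0, Complex.real_smul]

lemma fhat_sub_neg_I_mul_eq_complexMGF_sub (hρ₁ : AEMeasurable ρ₁) (hρ₁0 : ∀ s, 0 ≤ ρ₁ s)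
    (hρ₂ : AEMeasurable ρ₂) (hρ₂0 : ∀ s, 0 ≤ ρ₂ s) {w : ℂ}
    (h₁ : w.re ∈ integrableExpSet id (densityMeasure ρ₁))
    (h₂ : w.re ∈ integrableExpSet id (densityMeasure ρ₂)) :
    fhat (fun s => ρ₁ s - ρ₂ s) (-I * w) =
      complexMGF id (densityMeasure ρ₁) w - complexMGF id (densityMeasure ρ₂) w := by
  have hw : I * (-I * w) = w := by ring_nf; simp
  rw [complexMGF_densityMeasure hρ₁ hρ₁0, complexMGF_densityMeasure hρ₂ hρ₂0,
    ← integral_sub (integrable_mul_cexp_of_re_mem_integrableExpSet hρ₁ hρ₁0 h₁)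
      (integrable_mul_cexp_of_re_mem_integrableExpSet hρ₂ hρ₂0 h₂), fhat, hw]
  simp only [ofReal_sub, sub_mul]

lemma integral_sub_mul_pow_eq_integral_pow_sub (hρ₁ : AEMeasurable ρ₁) (hρ₁0 : ∀ s, 0 ≤ ρ₁ s)
    (hρ₂ : AEMeasurable ρ₂) (hρ₂0 : ∀ s, 0 ≤ ρ₂ s)
    (h₁ : 0 ∈ interior (integrableExpSet id (densityMeasure ρ₁)))
    (h₂ : 0 ∈ interior (integrableExpSet id (densityMeasure ρ₂))) (k : ℕ) :
    ∫ s, (ρ₁ s - ρ₂ s) * s ^ k =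
      ∫ x, x ^ k ∂densityMeasure ρ₁ - ∫ x, x ^ k ∂densityMeasure ρ₂ := by
  simp only [integral_densityMeasure hρ₁ hρ₁0, integral_densityMeasure hρ₂ hρ₂0, smul_eq_mul]
  rw [← integral_sub (integrable_mul_pow_of_mem_interior_integrableExpSet hρ₁ hρ₁0 h₁ k)
    (integrable_mul_pow_of_mem_interior_integrableExpSet hρ₂ hρ₂0 h₂ k)]
  simp only [sub_mul]

end densityMeasure

theorem stmt16_general (c c₁ : ℝ) (hc₁ : 0 < c₁) (hc₁c : c₁ < c)
    (ν : ℝ → ℝ) (hν0 : ∀ s, 0 ≤ ν s) (hνdecay : ∀ s : ℝ, ν s ≤ Real.exp (-c * |s|))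
    (hνprob : ∫ s : ℝ, ν s = 1)
    (μ σ : ℝ) (hσ : 0 < σ) (ε : ℝ)
    (hF : ∀ z : ℂ, ‖z‖ ≤ c₁ →
        ‖fhat (fun s => ν s - gaussDensity μ σ s) z‖ ≤ ε) :
    ∀ k : ℕ,
      |∫ s : ℝ, (ν s - gaussDensity μ σ s) * s ^ k| ≤ ((k.factorial : ℝ) / c₁ ^ k) * ε := by
  intro k
  have hν : AEMeasurable ν := (Integrable.of_integral_ne_zero (by simp [hνprob])).aemeasurable
  have hg : AEMeasurable (gaussDensity μ σ) := (continuous_gaussDensity μ σ).aemeasurable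
  obtain ⟨K, hK⟩ := gaussDensity_le_mul_exp_neg_mul_abs μ hσ c
  have hIcc : Icc (-c₁) c₁ ⊆ Ioo (-c) c := Icc_subset_Ioo (by linarith) hc₁c
  have hνexp := hIcc.trans <|
    Ioo_subset_interior_integrableExpSet_densityMeasure hν hν0 (K := 1) (by simpa using hνdecay)
  have hgexp := hIcc.trans <|
    Ioo_subset_interior_integrableExpSet_densityMeasure hg (gaussDensity_nonneg μ σ) hK
  have h0 : (0 : ℝ) ∈ Icc (-c₁) c₁ := by simp [hc₁.le]
  rw [integral_sub_mul_pow_eq_integral_pow_sub hν hν0 hg (gaussDensity_nonneg μ σ)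
    (hνexp h0) (hgexp h0), div_mul_eq_mul_div]
  refine abs_integral_pow_sub_le_of_norm_complexMGF_sub_le hc₁ hνexp hgexp (fun w hw => ?_) k
  have hwball := sphere_subset_closedBall hw
  rw [← fhat_sub_neg_I_mul_eq_complexMGF_sub hν hν0 hg (gaussDensity_nonneg μ σ)
    (interior_subset (re_mem_of_mem_closedBall hνexp hwball))
    (interior_subset (re_mem_of_mem_closedBall hgexp hwball))]
  exact hF _ (by simpa using hwball)

/-- if a probability density `ν` decays like `e^{−c|s|}` and the
Fourier transform of `f = ν − φ_{μ,σ}` is bounded by `ε` on the complex disc of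
radius `c₁ < c`, then all moments of `f` are bounded by `(k!/c₁^k) ε`. -/
theorem stmt16 (c c₁ : ℝ) (hc : 0 < c) (hc₁ : 0 < c₁) (hc₁c : c₁ < c)
    (ν : ℝ → ℝ) (hν0 : ∀ s, 0 ≤ ν s) (hνdecay : ∀ s : ℝ, ν s ≤ Real.exp (-c * |s|))
    (hνprob : ∫ s : ℝ, ν s = 1)
    (μ σ : ℝ) (hσ : 0 < σ) (ε : ℝ) (hε : 0 < ε)
    (hF : ∀ z : ℂ, ‖z‖ ≤ c₁ →
        ‖fhat (fun s => ν s - gaussDensity μ σ s) z‖ ≤ ε) :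
    ∀ k : ℕ,
      |∫ s : ℝ, (ν s - gaussDensity μ σ s) * s ^ k| ≤ ((k.factorial : ℝ) / c₁ ^ k) * ε :=
  stmt16_general c c₁ hc₁ hc₁c ν hν0 hνdecay hνprob μ σ hσ ε hF
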